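/- Let n ≥ 1 and q ≥ 1 be natural numbers, let S ⊆ ℝ^n be compact, and let μ : ℝ^n → ℝ^q and Σ : ℝ^n → (q×q real matrices) be continuously differentiable, with Σ(x) symmetric positive definite for every x in an open set containing S. Define the Gaussian density p(x, y) = (2π)^{−q/2} · det(Σ(x))^{−1/2} · exp(−(1/2)·(y − μ(x))ᵀ Σ(x)⁻¹ (y − μ(x))) for x ∈ ℝ^n and y ∈ ℝ^q. Then there exist constants C₁, C₂ ≥ 0 such that for all x ∈ S and y ∈ ℝ^q, the map x' ↦ p(x', y) is differentiable at x and the norm of its Fréchet derivative at x is at most (C₁ + C₂·‖y‖²)·p(x, y), where ‖y‖ is the Euclidean norm on ℝ^q. -/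

import Mathlib

/-!
On the open set where `Σ` is positive definite, `p = exp ∘ log p` with
`log p(x, y) = const - ½ log det Σ(x) - ½ (y - μ(x))ᵀ Σ(x)⁻¹ (y - μ(x))`, so `∇ₓ p = p · ∇ₓ log p`.
There the entries of `Σ⁻¹ = adj Σ / det Σ` and `log det Σ` are `C¹`, so they, `μ`, and all their
derivatives are bounded on the compact set `S`. The product rule then bounds `∇ₓ` of the quadratic
form, hence `∇ₓ log p`, by a quadratic polynomial in `‖y‖`.
-/

open scoped BigOperators

/-- The density at `y` of a multivariate normal distribution `N(μ(x), Σ(x))` on `ℝ^q`: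
`p(x, y) = (2π)^{-q/2} det(Σ(x))^{-1/2} exp(-(1/2)(y - μ(x))ᵀ Σ(x)⁻¹ (y - μ(x)))`. -/
noncomputable def gaussDensity {n q : ℕ}
    (μ : EuclideanSpace ℝ (Fin n) → EuclideanSpace ℝ (Fin q))
    (Cov : EuclideanSpace ℝ (Fin n) → Matrix (Fin q) (Fin q) ℝ)
    (x : EuclideanSpace ℝ (Fin n)) (y : EuclideanSpace ℝ (Fin q)) : ℝ :=
  (2 * Real.pi) ^ (-(q : ℝ) / 2) * (Cov x).det ^ (-(1 : ℝ) / 2) *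
    Real.exp (-(1 / 2) * ∑ i, ∑ j, (y i - μ x i) * ((Cov x)⁻¹ i j) * (y j - μ x j))

open Filter Topology

section MatrixEntries

variable {E : Type*} [NormedAddCommGroup E] [NormedSpace ℝ E] {ι : Type*} [Fintype ι]
  [DecidableEq ι] {A : E → Matrix ι ι ℝ} {k : WithTop ℕ∞}

theorem contDiff_det_of_entries (hA : ∀ i j, ContDiff ℝ k fun x => A x i j) :
    ContDiff ℝ k fun x => (A x).det := by
  simp only [Matrix.det_apply']
  exact ContDiff.sum fun σ _ => contDiff_const.mul (contDiff_prod fun i _ => hA (σ i) i)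

theorem contDiff_adjugate_apply_of_entries (hA : ∀ i j, ContDiff ℝ k fun x => A x i j)
    (i j : ι) : ContDiff ℝ k fun x => (A x).adjugate i j := by
  simp only [Matrix.adjugate_apply]
  refine contDiff_det_of_entries fun l m => ?_
  by_cases h : l = j
  · simpa only [Matrix.updateRow_apply, h, if_true] using contDiff_const
  · simpa only [Matrix.updateRow_apply, h, if_false] using hA l m

theorem contDiffAt_inv_apply_of_entries (hA : ∀ i j, ContDiff ℝ k fun x => A x i j) {x : E}
    (hx : (A x).det ≠ 0) (i j : ι) : ContDiffAt ℝ k (fun x => (A x)⁻¹ i j) x := by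
  simp only [Matrix.inv_def, Ring.inverse_eq_inv, Matrix.smul_apply, smul_eq_mul]
  exact ((contDiff_det_of_entries hA).contDiffAt.inv hx).mul
    (contDiff_adjugate_apply_of_entries hA i j).contDiffAt

end MatrixEntries

section DerivativeBounds

variable {E : Type*} [NormedAddCommGroup E] [NormedSpace ℝ E] {x : E}

theorem IsCompact.eventually_norm_le_and_norm_fderiv_le {F : Type*} [NormedAddCommGroup F]
    [NormedSpace ℝ F] {S U : Set E} {f : E → F} (hS : IsCompact S) (hU : IsOpen U) (hSU : S ⊆ U)
    (hf : ContDiffOn ℝ 1 f U) :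
    ∀ᶠ K in atTop, ∀ x ∈ S, ‖f x‖ ≤ K ∧ ‖fderiv ℝ f x‖ ≤ K := by
  obtain ⟨A, hA⟩ := hS.exists_bound_of_continuousOn (hf.continuousOn.mono hSU)
  obtain ⟨B, hB⟩ := hS.exists_bound_of_continuousOn
    ((hf.continuousOn_fderiv_of_isOpen hU le_rfl).mono hSU)
  filter_upwards [eventually_ge_atTop (max A B)] with K hK x hx
  exact ⟨(hA x hx).trans ((le_max_left _ _).trans hK),
    (hB x hx).trans ((le_max_right _ _).trans hK)⟩

theorem norm_fderiv_mul_le {f g : E → ℝ} (hf : DifferentiableAt ℝ f x)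
    (hg : DifferentiableAt ℝ g x) :
    ‖fderiv ℝ (fun x => f x * g x) x‖ ≤ ‖f x‖ * ‖fderiv ℝ g x‖ + ‖fderiv ℝ f x‖ * ‖g x‖ := by
  rw [fderiv_fun_mul hf hg, mul_comm ‖fderiv ℝ f x‖, ← norm_smul, ← norm_smul]
  exact norm_add_le _ _

theorem norm_fderiv_mul_mul_le {f g h : E → ℝ} (hf : DifferentiableAt ℝ f x)
    (hg : DifferentiableAt ℝ g x) (hh : DifferentiableAt ℝ h x) :
    ‖fderiv ℝ (fun x => f x * g x * h x) x‖ ≤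
      ‖fderiv ℝ f x‖ * ‖g x‖ * ‖h x‖ + ‖f x‖ * ‖fderiv ℝ g x‖ * ‖h x‖ +
        ‖f x‖ * ‖g x‖ * ‖fderiv ℝ h x‖ := by
  calc ‖fderiv ℝ (fun x => f x * g x * h x) x‖
      ≤ ‖f x * g x‖ * ‖fderiv ℝ h x‖ + ‖fderiv ℝ (fun x => f x * g x) x‖ * ‖h x‖ :=
        norm_fderiv_mul_le (hf.mul hg) hh
    _ ≤ ‖f x * g x‖ * ‖fderiv ℝ h x‖ +
        (‖f x‖ * ‖fderiv ℝ g x‖ + ‖fderiv ℝ f x‖ * ‖g x‖) * ‖h x‖ := by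
        gcongr; exact norm_fderiv_mul_le hf hg
    _ = _ := by rw [norm_mul]; ring

theorem norm_fderiv_quadForm_le {ι : Type*} [Fintype ι] {r : ι → E → ℝ} {M : ι → ι → E → ℝ}
    {R K : ℝ} (hr : ∀ i, DifferentiableAt ℝ (r i) x)
    (hM : ∀ i j, DifferentiableAt ℝ (M i j) x) (hr_le : ∀ i, ‖r i x‖ ≤ R)
    (hDr : ∀ i, ‖fderiv ℝ (r i) x‖ ≤ K) (hM_le : ∀ i j, ‖M i j x‖ ≤ K)
    (hDM : ∀ i j, ‖fderiv ℝ (M i j) x‖ ≤ K) :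
    DifferentiableAt ℝ (fun x => ∑ i, ∑ j, r i x * M i j x * r j x) x ∧
      ‖fderiv ℝ (fun x => ∑ i, ∑ j, r i x * M i j x * r j x) x‖ ≤
        Fintype.card ι ^ 2 * (2 * K ^ 2 * R + K * R ^ 2) := by
  have hterm : ∀ i j, ‖fderiv ℝ (fun x => r i x * M i j x * r j x) x‖ ≤
      2 * K ^ 2 * R + K * R ^ 2 := by
    intro i j
    have hR : 0 ≤ R := (norm_nonneg _).trans (hr_le i)
    have hK : 0 ≤ K := (norm_nonneg _).trans (hDr i)
    calc _ ≤ K * K * R + R * K * R + R * K * K := by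
          refine (norm_fderiv_mul_mul_le (hr i) (hM i j) (hr j)).trans ?_
          gcongr <;> simp only [hr_le, hDr, hM_le, hDM]
      _ = _ := by ring
  have hsum : HasFDerivAt (fun x => ∑ i, ∑ j, r i x * M i j x * r j x)
      (∑ i, ∑ j, fderiv ℝ (fun x => r i x * M i j x * r j x) x) x :=
    HasFDerivAt.fun_sum fun i _ => HasFDerivAt.fun_sum fun j _ =>
      (((hr i).mul (hM i j)).mul (hr j)).hasFDerivAt
  refine ⟨hsum.differentiableAt, ?_⟩
  rw [hsum.fderiv]
  calc _ ≤ ∑ i, ∑ j, ‖fderiv ℝ (fun x => r i x * M i j x * r j x) x‖ :=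
        (norm_sum_le _ _).trans (Finset.sum_le_sum fun i _ => norm_sum_le _ _)
    _ ≤ ∑ i : ι, ∑ j : ι, (2 * K ^ 2 * R + K * R ^ 2) :=
        Finset.sum_le_sum fun i _ => Finset.sum_le_sum fun j _ => hterm i j
    _ = _ := by simp only [Finset.sum_const, Finset.card_univ, nsmul_eq_mul]; ring

theorem norm_fderiv_of_eventuallyEq_exp {f g : E → ℝ}
    (hfg : f =ᶠ[𝓝 x] fun x => Real.exp (g x)) (hg : DifferentiableAt ℝ g x) :
    DifferentiableAt ℝ f x ∧ ‖fderiv ℝ f x‖ = f x * ‖fderiv ℝ g x‖ := by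
  have hfx : f x = Real.exp (g x) := hfg.eq_of_nhds
  have hf : HasFDerivAt f (f x • fderiv ℝ g x) x := by
    rw [hfx]; exact hg.hasFDerivAt.exp.congr_of_eventuallyEq hfg
  refine ⟨hf.differentiableAt, ?_⟩
  rw [hf.fderiv, norm_smul, Real.norm_of_nonneg (hfx ▸ (Real.exp_pos _).le)]

end DerivativeBounds

section GaussianScore

variable {n q : ℕ} (μ : EuclideanSpace ℝ (Fin n) → EuclideanSpace ℝ (Fin q))
  (Cov : EuclideanSpace ℝ (Fin n) → Matrix (Fin q) (Fin q) ℝ)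

noncomputable def gaussLogDensity (x : EuclideanSpace ℝ (Fin n))
    (y : EuclideanSpace ℝ (Fin q)) : ℝ :=
  -(q / 2 : ℝ) * Real.log (2 * Real.pi) - 1 / 2 * Real.log (Cov x).det -
    1 / 2 * ∑ i, ∑ j, (y i - μ x i) * ((Cov x)⁻¹ i j) * (y j - μ x j)

theorem gaussDensity_eq_exp_gaussLogDensity {x : EuclideanSpace ℝ (Fin n)}
    (hx : 0 < (Cov x).det) (y : EuclideanSpace ℝ (Fin q)) :
    gaussDensity μ Cov x y = Real.exp (gaussLogDensity μ Cov x y) := by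
  rw [gaussDensity, gaussLogDensity, Real.rpow_def_of_pos (by positivity),
    Real.rpow_def_of_pos hx, ← Real.exp_add, ← Real.exp_add]
  congr 1
  ring

variable {μ Cov} {x : EuclideanSpace ℝ (Fin n)} {K : ℝ}

theorem norm_fderiv_gaussLogDensity_le (y : EuclideanSpace ℝ (Fin q)) (hK : 1 ≤ K)
    (hμ : ∀ i, DifferentiableAt ℝ (fun x => μ x i) x)
    (hM : ∀ i j, DifferentiableAt ℝ (fun x => (Cov x)⁻¹ i j) x)
    (hL : DifferentiableAt ℝ (fun x => Real.log (Cov x).det) x)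
    (hμ_le : ∀ i, ‖μ x i‖ ≤ K) (hDμ : ∀ i, ‖fderiv ℝ (fun x => μ x i) x‖ ≤ K)
    (hM_le : ∀ i j, ‖(Cov x)⁻¹ i j‖ ≤ K)
    (hDM : ∀ i j, ‖fderiv ℝ (fun x => (Cov x)⁻¹ i j) x‖ ≤ K)
    (hDL : ‖fderiv ℝ (fun x => Real.log (Cov x).det) x‖ ≤ K) :
    DifferentiableAt ℝ (fun x => gaussLogDensity μ Cov x y) x ∧
      ‖fderiv ℝ (fun x => gaussLogDensity μ Cov x y) x‖ ≤
        (1 + 3 * q ^ 2) * K ^ 3 * (1 + ‖y‖ ^ 2) := by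
  have hr : ∀ i, DifferentiableAt ℝ (fun x => y i - μ x i) x := fun i => (hμ i).const_sub _
  obtain ⟨hQ, hQ_le⟩ := norm_fderiv_quadForm_le (x := x) (R := ‖y‖ + K) hr hM
    (fun i => (norm_sub_le _ _).trans (add_le_add (PiLp.norm_apply_le y i) (hμ_le i)))
    (fun i => by rw [fderiv_const_sub, norm_neg]; exact hDμ i) hM_le hDM
  have hψ : HasFDerivAt (fun x => gaussLogDensity μ Cov x y)
      (0 - (1 / 2 : ℝ) • fderiv ℝ (fun x => Real.log (Cov x).det) x - (1 / 2 : ℝ) •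
        fderiv ℝ (fun x => ∑ i, ∑ j, (y i - μ x i) * ((Cov x)⁻¹ i j) * (y j - μ x j)) x) x :=
    ((hasFDerivAt_const _ x).sub (hL.hasFDerivAt.const_mul (1 / 2))).sub
      (hQ.hasFDerivAt.const_mul (1 / 2))
  refine ⟨hψ.differentiableAt, ?_⟩
  have hK0 : 0 ≤ K := zero_le_one.trans hK
  have hy : ‖y‖ + K ≤ K * (1 + ‖y‖) := by nlinarith [norm_nonneg y]
  have hy2 : (1 + ‖y‖) ^ 2 ≤ 2 * (1 + ‖y‖ ^ 2) := by nlinarith [sq_nonneg (‖y‖ - 1)]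
  rw [Fintype.card_fin] at hQ_le
  rw [hψ.fderiv]
  calc _ ≤ 1 / 2 * K + 1 / 2 * (q ^ 2 * (2 * K ^ 2 * (‖y‖ + K) + K * (‖y‖ + K) ^ 2)) := by
        refine (norm_sub_le _ _).trans (add_le_add ?_ ?_)
        · rw [zero_sub, norm_neg, norm_smul, Real.norm_of_nonneg (by norm_num)]
          gcongr
        · rw [norm_smul, Real.norm_of_nonneg (by norm_num)]
          gcongr
    _ ≤ 1 / 2 * K +
          1 / 2 * (q ^ 2 * (2 * K ^ 2 * (K * (1 + ‖y‖)) + K * (K * (1 + ‖y‖)) ^ 2)) := by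
        gcongr
    _ ≤ 1 / 2 * K + 1 / 2 * (q ^ 2 * (3 * K ^ 3 * (1 + ‖y‖) ^ 2)) := by
        gcongr
        nlinarith [norm_nonneg y, pow_nonneg hK0 3]
    _ ≤ K ^ 3 * (1 + ‖y‖ ^ 2) + 1 / 2 * (q ^ 2 * (3 * K ^ 3 * (2 * (1 + ‖y‖ ^ 2)))) := by
        refine add_le_add ?_ (by gcongr)
        nlinarith [le_self_pow₀ hK (show 3 ≠ 0 by norm_num), sq_nonneg ‖y‖, pow_nonneg hK0 3]
    _ = (1 + 3 * q ^ 2) * K ^ 3 * (1 + ‖y‖ ^ 2) := by ring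

end GaussianScore

theorem stmt_12_general {n q : ℕ}
    (S : Set (EuclideanSpace ℝ (Fin n))) (hS : IsCompact S)
    (μ : EuclideanSpace ℝ (Fin n) → EuclideanSpace ℝ (Fin q)) (hμ : ContDiff ℝ 1 μ)
    (Cov : EuclideanSpace ℝ (Fin n) → Matrix (Fin q) (Fin q) ℝ)
    (hCov : ∀ i j, ContDiff ℝ 1 fun x => Cov x i j)
    (U : Set (EuclideanSpace ℝ (Fin n))) (hU : IsOpen U) (hSU : S ⊆ U)
    (hPD : ∀ x ∈ U, (Cov x).PosDef) :
    ∃ C₁ C₂ : ℝ, 0 ≤ C₁ ∧ 0 ≤ C₂ ∧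
      ∀ x ∈ S, ∀ y : EuclideanSpace ℝ (Fin q),
        DifferentiableAt ℝ (fun x' => gaussDensity μ Cov x' y) x ∧
        ‖fderiv ℝ (fun x' => gaussDensity μ Cov x' y) x‖ ≤
          (C₁ + C₂ * ‖y‖ ^ 2) * gaussDensity μ Cov x y := by
  have hdet : ∀ x ∈ U, 0 < (Cov x).det := fun x hx => (hPD x hx).det_pos
  have hμ' : ∀ i, ContDiff ℝ 1 fun x => μ x i :=
    fun i => (EuclideanSpace.proj (𝕜 := ℝ) i).contDiff.comp hμ
  have hM : ∀ i j, ContDiffOn ℝ 1 (fun x => (Cov x)⁻¹ i j) U := fun i j x hx =>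
    (contDiffAt_inv_apply_of_entries hCov (hdet x hx).ne' i j).contDiffWithinAt
  have hL : ContDiffOn ℝ 1 (fun x => Real.log (Cov x).det) U := fun x hx =>
    ((contDiff_det_of_entries hCov).contDiffAt.log (hdet x hx).ne').contDiffWithinAt
  obtain ⟨K, hK, hμK, hMK, hLK⟩ := ((eventually_ge_atTop 1).and <|
    (eventually_all.2 fun i =>
      hS.eventually_norm_le_and_norm_fderiv_le hU hSU (hμ' i).contDiffOn).and <|
    (eventually_all.2 fun i => eventually_all.2 fun j =>
      hS.eventually_norm_le_and_norm_fderiv_le hU hSU (hM i j)).and <|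
    hS.eventually_norm_le_and_norm_fderiv_le hU hSU hL).exists
  refine ⟨(1 + 3 * q ^ 2) * K ^ 3, (1 + 3 * q ^ 2) * K ^ 3, by positivity, by positivity,
    fun x hx y => ?_⟩
  have hUx : U ∈ 𝓝 x := hU.mem_nhds (hSU hx)
  obtain ⟨hψ, hψ_le⟩ := norm_fderiv_gaussLogDensity_le y hK
    (fun i => (hμ' i).differentiable one_ne_zero x)
    (fun i j => ((hM i j).differentiableOn one_ne_zero x (hSU hx)).differentiableAt hUx)
    ((hL.differentiableOn one_ne_zero x (hSU hx)).differentiableAt hUx)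
    (fun i => (hμK i x hx).1) (fun i => (hμK i x hx).2) (fun i j => (hMK i j x hx).1)
    (fun i j => (hMK i j x hx).2) (hLK x hx).2
  have hp : (fun x' => gaussDensity μ Cov x' y) =ᶠ[𝓝 x]
      fun x' => Real.exp (gaussLogDensity μ Cov x' y) :=
    eventually_of_mem hUx fun x' hx' =>
      gaussDensity_eq_exp_gaussLogDensity μ Cov (hdet x' hx') y
  obtain ⟨hp_diff, hp_norm⟩ := norm_fderiv_of_eventuallyEq_exp hp hψ
  refine ⟨hp_diff, ?_⟩
  rw [hp_norm, mul_comm, ← mul_one_add]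
  exact mul_le_mul_of_nonneg_right hψ_le (hp.eq_of_nhds ▸ (Real.exp_pos _).le)

/-- Gradient bound for a parameterized Gaussian density (third bound of Lemma 2): for
continuously differentiable mean `μ` and covariance `Σ`, with `Σ(x)` symmetric positive
definite on an open set containing the compact set `S`, there are constants `C₁, C₂ ≥ 0`
such that for all `x ∈ S` and `y`, the map `x' ↦ p(x', y)` is differentiable at `x` and
`‖∇ₓ p(x, y)‖ ≤ (C₁ + C₂ ‖y‖²) p(x, y)`. -/
theorem stmt_12 {n q : ℕ} (hn : 1 ≤ n) (hq : 1 ≤ q)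
    (S : Set (EuclideanSpace ℝ (Fin n))) (hS : IsCompact S)
    (μ : EuclideanSpace ℝ (Fin n) → EuclideanSpace ℝ (Fin q)) (hμ : ContDiff ℝ 1 μ)
    (Cov : EuclideanSpace ℝ (Fin n) → Matrix (Fin q) (Fin q) ℝ)
    (hCov : ∀ i j, ContDiff ℝ 1 fun x => Cov x i j)
    (U : Set (EuclideanSpace ℝ (Fin n))) (hU : IsOpen U) (hSU : S ⊆ U)
    (hPD : ∀ x ∈ U, (Cov x).PosDef) :
    ∃ C₁ C₂ : ℝ, 0 ≤ C₁ ∧ 0 ≤ C₂ ∧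
      ∀ x ∈ S, ∀ y : EuclideanSpace ℝ (Fin q),
        DifferentiableAt ℝ (fun x' => gaussDensity μ Cov x' y) x ∧
        ‖fderiv ℝ (fun x' => gaussDensity μ Cov x' y) x‖ ≤
          (C₁ + C₂ * ‖y‖ ^ 2) * gaussDensity μ Cov x y :=
  stmt_12_general S hS μ hμ Cov hCov U hU hSU hPD
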